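/- arXiv:1910.02389 — 3 statements merged into one kernel-verified Lean document; each statement's English description precedes it below -/
import Mathlib

section
/- Let s_1, s_2, …, s_{C(n,2)} be an enumeration of all transpositions in S_n, each occurring exactly once, in an arbitrary fixed order. Then every permutation π ∈ S_n can be written as the product of some subsequence of (s_1, …, s_{C(n,2)}) taken in order: there exist ε_1, …, ε_{C(n,2)} ∈ {0,1} with π = s_1^{ε_1} · s_2^{ε_2} ⋯ s_{C(n,2)}^{ε_{C(n,2)}}. -/
/-!
Multiplying `π` on the right by a transposition `(x y)` with `x, y` in one cycle of `π` splits
that cycle in two, separating `x` from `y`; the cycles of the product refine those of `π`. So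
read the enumeration from the right: when the last transposition joins two points of a common
cycle of `π`, use it and recurse on `π * (x y)`, which needs only the earlier transpositions;
otherwise skip it. When the list is exhausted no nontrivial cycle is left, so `π = 1`.
-/

namespace Equiv.Perm

variable {α : Type*}

theorem SameCycle.of_forall_sameCycle_apply {f g : Perm α} (h : ∀ u, g.SameCycle u (f u))
    {u v : α} (huv : f.SameCycle u v) : g.SameCycle u v := by
  suffices ∀ i : ℤ, ∀ u, g.SameCycle u ((f ^ i) u) by
    obtain ⟨i, rfl⟩ := huv
    exact this i u
  intro i
  induction i using Int.induction_on with
  | zero => exact fun u => SameCycle.refl g u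
  | succ i ih =>
    intro u
    rw [zpow_add_one, mul_apply]
    exact (h u).trans (ih _)
  | pred i ih =>
    intro u
    rw [zpow_sub_one, mul_apply]
    exact (by simpa using h (f⁻¹ u) : g.SameCycle (f⁻¹ u) u).symm.trans (ih _)

variable [DecidableEq α] {π : Perm α} {x y : α}

theorem SameCycle.sameCycle_mul_swap_apply (hxy : π.SameCycle x y) (u : α) :
    π.SameCycle u ((π * swap x y) u) := by
  rw [mul_apply, sameCycle_apply_right, swap_apply_def]
  split_ifs with hx hy
  · exact hx ▸ hxy
  · exact hy ▸ hxy.symm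
  · exact SameCycle.refl π u

theorem SameCycle.of_mul_swap (hxy : π.SameCycle x y) {u v : α}
    (huv : (π * swap x y).SameCycle u v) : π.SameCycle u v :=
  huv.of_forall_sameCycle_apply hxy.sameCycle_mul_swap_apply

/-- The arc `π x, π² x, …, π^m x = y` of the cycle (with `m` least) is mapped into itself by
`π * swap x y`, which sends `y` back to `π x`, and it avoids `x`. -/
theorem not_sameCycle_mul_swap [Finite α] (hne : x ≠ y) (hxy : π.SameCycle x y) :
    ¬(π * swap x y).SameCycle x y := by
  have hex : ∃ m, (π ^ m) x = y := hxy.exists_nat_pow_eq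
  set m := Nat.find hex
  have hm : (π ^ m) x = y := Nat.find_spec hex
  have hmin : ∀ j < m, (π ^ j) x ≠ y := fun j hj => Nat.find_min hex hj
  have hm_pos : 1 ≤ m := Nat.one_le_iff_ne_zero.2 fun h => hne (by simpa [h] using hm)
  set arc : Set α := {z | ∃ j ∈ Set.Icc 1 m, (π ^ j) x = z}
  have hx_arc : x ∉ arc := by
    rintro ⟨j, ⟨hj1, hjm⟩, hj⟩
    refine hmin (m - j) (by omega) ?_
    rw [← hm, ← Nat.sub_add_cancel hjm, pow_add, mul_apply, hj, Nat.sub_add_cancel hjm]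
  have hmaps : Set.MapsTo (π * swap x y) arc arc := by
    rintro _ ⟨j, ⟨hj1, hjm⟩, rfl⟩
    rcases hjm.lt_or_eq with hjm | rfl
    · have hz_ne_x : (π ^ j) x ≠ x := fun h => hx_arc ⟨j, ⟨hj1, hjm.le⟩, h⟩
      refine ⟨j + 1, ⟨by omega, hjm⟩, ?_⟩
      rw [mul_apply, swap_apply_of_ne_of_ne hz_ne_x (hmin j hjm), pow_succ', mul_apply]
    · exact ⟨1, ⟨le_rfl, hm_pos⟩, by rw [mul_apply, hm, swap_apply_right, pow_one]⟩
  intro h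
  obtain ⟨k, hk⟩ := h.symm.exists_nat_pow_eq
  rw [coe_pow] at hk
  exact hx_arc (hk ▸ hmaps.iterate k ⟨m, ⟨hm_pos, le_rfl⟩, hm⟩)

theorem exists_sublist_prod_eq [Finite α] (π : Perm α) (L : List (Perm α))
    (hL : ∀ x y, x ≠ y → π.SameCycle x y → swap x y ∈ L) :
    ∃ l : List (Perm α), l.Sublist L ∧ l.prod = π := by
  induction L using List.reverseRecOn generalizing π with
  | nil =>
    refine ⟨[], List.Sublist.slnil, Perm.ext fun u => ?_⟩
    rw [List.prod_nil, one_apply]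
    by_contra hu
    exact List.not_mem_nil (hL u (π u) hu (sameCycle_apply_right.2 (.refl π u)))
  | append_singleton L t ih =>
    by_cases ht : ∃ x y, x ≠ y ∧ π.SameCycle x y ∧ t = swap x y
    · obtain ⟨x, y, hne, hxy, rfl⟩ := ht
      obtain ⟨l, hl, hprod⟩ := ih (π * swap x y) fun u v huv huv' => by
        have hπuv := hxy.of_mul_swap huv'
        refine (List.mem_append.1 (hL u v huv hπuv)).resolve_right fun h => ?_
        rw [List.mem_singleton] at h
        exact not_sameCycle_mul_swap huv hπuv (h ▸ huv')
      exact ⟨l ++ [swap x y], hl.append_right _, by simp [hprod, mul_assoc]⟩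
    · obtain ⟨l, hl, hprod⟩ := ih π fun x y hne hxy =>
        (List.mem_append.1 (hL x y hne hxy)).resolve_right fun h =>
          ht ⟨x, y, hne, hxy, (List.mem_singleton.1 h).symm⟩
      exact ⟨l, hl.trans (List.sublist_append_left L [t]), hprod⟩

end Equiv.Perm

theorem List.Sublist.exists_prod_eq_prod_ofFn_ite {M : Type*} [Monoid M] :
    ∀ {n : ℕ} {f : Fin n → M} {l : List M}, l.Sublist (List.ofFn f) →
      ∃ ε : Fin n → Bool, l.prod = (List.ofFn fun k => if ε k then f k else 1).prod
  | 0, _, _, h => ⟨Fin.elim0, by simp_all⟩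
  | _ + 1, f, _, h => by
    rw [List.ofFn_succ, List.sublist_cons_iff] at h
    rcases h with h | ⟨r, rfl, h⟩
    · obtain ⟨ε, hε⟩ := exists_prod_eq_prod_ofFn_ite h
      exact ⟨Fin.cons false ε, by simp [List.ofFn_succ, hε]⟩
    · obtain ⟨ε, hε⟩ := exists_prod_eq_prod_ofFn_ite h
      exact ⟨Fin.cons true ε, by simp [List.ofFn_succ, hε]⟩

theorem exists_subsequence_product_of_transposition_enumeration_general (n : ℕ)
    (s : Fin (n.choose 2) → Equiv.Perm (Fin n))
    (hall : ∀ τ : Equiv.Perm (Fin n), τ.IsSwap → ∃ k, s k = τ)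
    (π : Equiv.Perm (Fin n)) :
    ∃ ε : Fin (n.choose 2) → Bool,
      π = (List.ofFn fun k => if ε k then s k else 1).prod := by
  obtain ⟨l, hl, rfl⟩ := Equiv.Perm.exists_sublist_prod_eq π (List.ofFn s) fun x y hne _ =>
    List.mem_ofFn.2 (hall _ ⟨x, y, hne, rfl⟩)
  exact hl.exists_prod_eq_prod_ofFn_ite

/-- Let `s_1, …, s_{C(n,2)}` be an enumeration of all transpositions of
`S_n`, each occurring exactly once, in an arbitrary fixed order. Then every `π ∈ S_n`
is the product of some subsequence of `(s_1, …, s_{C(n,2)})` taken in order: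
there are `ε_k ∈ {0,1}` with `π = s_1^{ε_1} ⋯ s_{C(n,2)}^{ε_{C(n,2)}}`. -/
theorem exists_subsequence_product_of_transposition_enumeration (n : ℕ) (hn : 2 ≤ n)
    (s : Fin (n.choose 2) → Equiv.Perm (Fin n))
    (hswap : ∀ k, (s k).IsSwap)
    (hinj : Function.Injective s)
    (hall : ∀ τ : Equiv.Perm (Fin n), τ.IsSwap → ∃ k, s k = τ)
    (π : Equiv.Perm (Fin n)) :
    ∃ ε : Fin (n.choose 2) → Bool,
      π = (List.ofFn fun k => if ε k then s k else 1).prod :=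
  exists_subsequence_product_of_transposition_enumeration_general n s hall π
end

section
/- Let s_1, …, s_m be transpositions in S_n, and suppose the greedy procedure starting from π (multiply on the left by s_k whenever doing so strictly decreases the Cayley length of the current product) terminates at a permutation π′ that is not the identity. Then there exist p ≠ q in the same cycle of π′ such that the transposition (p q) never occurs among s_1, …, s_m. Equivalently, if every transposition occurs in the sequence, the greedy procedure terminates at the identity. -/
/-!
The Cayley length of `σ` is `n` minus the number of cycles of `σ`, fixed points included,
and left multiplication by a transposition `(a b)` splits the cycle through `a` and `b` if
they share one and merges their two cycles otherwise. So the greedy procedure accepts `(a b)`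
exactly when `a` and `b` lie in one cycle of the current product, and each accepted step only
refines the partition into cycles. Right after the step for `(p q)`, `p` and `q` lie in
different cycles, and so they do at the end. If `π′ ≠ 1`, any `x` with `π′ x ≠ x` yields
`x` and `π′ x` in one cycle of `π′`, so their transposition cannot occur in the sequence.
-/

/-- The Cayley length of a permutation: the minimal number of transpositions whose
(ordered) product is `π`. -/
noncomputable def cayleyLength {n : ℕ} (π : Equiv.Perm (Fin n)) : ℕ :=
  sInf {k | ∃ l : List (Equiv.Perm (Fin n)),
    l.length = k ∧ (∀ s ∈ l, s.IsSwap) ∧ l.prod = π}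

/-- The greedy procedure: run through the list `s` in order, multiplying the current
permutation on the left by `s_k` exactly when doing so strictly decreases the Cayley
length. -/
noncomputable def greedy {n : ℕ} (π : Equiv.Perm (Fin n))
    (s : List (Equiv.Perm (Fin n))) : Equiv.Perm (Fin n) :=
  s.foldl (fun σ t => if cayleyLength (t * σ) < cayleyLength σ then t * σ else σ) π

open Equiv Finset

namespace Equiv.Perm

variable {α : Type*} {σ : Perm α} {s : Set α} {a b x y : α}

theorem SameCycle.mem_of_mapsTo [Finite α] (h : σ.SameCycle x y) (hs : Set.MapsTo σ s s)
    (hx : x ∈ s) : y ∈ s := by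
  obtain ⟨i, -, rfl⟩ := h.exists_pow_eq'
  rw [coe_pow]
  exact hs.iterate i hx

theorem mapsTo_sameCycle (σ : Perm α) (x : α) :
    Set.MapsTo σ {y | σ.SameCycle x y} {y | σ.SameCycle x y} :=
  fun _ hz => sameCycle_apply_right.2 hz

theorem SameCycle.exists_pow_lt_of_pow_apply_eq_self [Finite α] {k : ℕ} (hk : 0 < k)
    (hper : (σ ^ k) x = x) (h : σ.SameCycle x y) : ∃ j < k, (σ ^ j) x = y := by
  obtain ⟨i, -, rfl⟩ := h.exists_pow_eq'
  refine ⟨i % k, Nat.mod_lt i hk, ?_⟩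
  calc (σ ^ (i % k)) x = (σ ^ (i % k)) (((σ ^ k) ^ (i / k)) x) := by
        rw [pow_apply_eq_self_of_apply_eq_self hper]
    _ = (σ ^ i) x := by rw [← mul_apply, ← pow_mul, ← pow_add, Nat.mod_add_div]

variable [DecidableEq α]

theorem mapsTo_swap_mul (hs : Set.MapsTo σ s s) (hab : a ∈ s ↔ b ∈ s) :
    Set.MapsTo (swap a b * σ) s s := by
  intro z hz
  rw [mul_apply, swap_apply_def]
  split_ifs with ha hb
  · exact hab.1 (ha ▸ hs hz)
  · exact hab.2 (hb ▸ hs hz)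
  · exact hs hz

theorem swap_mul_pow_apply {k : ℕ} (hk : 0 < k)
    (h : ∀ j, 0 < j → j < k → (σ ^ j) a ≠ a ∧ (σ ^ j) a ≠ b) :
    ((swap a b * σ) ^ k) a = swap a b ((σ ^ k) a) := by
  induction k, hk using Nat.le_induction with
  | base => simp
  | succ k hk ih =>
    obtain ⟨hka, hkb⟩ := h k hk k.lt_succ_self
    rw [pow_succ', mul_apply, ih fun j hj hjk => h j hj (hjk.trans k.lt_succ_self),
      swap_apply_of_ne_of_ne hka hkb, pow_succ', mul_apply, mul_apply]

/- Let `k` be the first return time of the `σ`-orbit of `a` to `{a, b}`. If it returns to `a`,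
that orbit misses `b` and `swap a b * σ` carries `a` to `b` in `k` steps; if it returns to `b`,
then `swap a b * σ` closes up the orbit of `a` after `k` steps without meeting `b`. -/
theorem sameCycle_swap_mul_iff [Finite α] (hab : a ≠ b) :
    (swap a b * σ).SameCycle a b ↔ ¬σ.SameCycle a b := by
  have hret : ∃ k, 0 < k ∧ ((σ ^ k) a = a ∨ (σ ^ k) a = b) :=
    ⟨orderOf σ, orderOf_pos σ, Or.inl (by rw [pow_orderOf_eq_one, one_apply])⟩
  obtain ⟨hk, hka⟩ := Nat.find_spec hret
  set k := Nat.find hret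
  have hmin : ∀ j, 0 < j → j < k → (σ ^ j) a ≠ a ∧ (σ ^ j) a ≠ b :=
    fun j hj hjk => not_or.1 fun h => Nat.find_min hret hjk ⟨hj, h⟩
  have hσ : ∀ j < k, (σ ^ j) a ≠ b := by
    intro j hjk
    rcases j.eq_zero_or_pos with rfl | hj
    · exact hab
    · exact (hmin j hj hjk).2
  have hτ : ∀ j < k, ((swap a b * σ) ^ j) a ≠ b := by
    intro j hjk
    rcases j.eq_zero_or_pos with rfl | hj
    · exact hab
    · rw [swap_mul_pow_apply hj fun i hi hij => hmin i hi (hij.trans hjk),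
        swap_apply_of_ne_of_ne (hmin j hj hjk).1 (hmin j hj hjk).2]
      exact (hmin j hj hjk).2
  have hτk := swap_mul_pow_apply hk hmin
  rcases hka with hka | hkb
  · rw [hka, swap_apply_left] at hτk
    refine iff_of_true ⟨k, by rwa [zpow_natCast]⟩ fun h => ?_
    obtain ⟨j, hjk, hj⟩ := h.exists_pow_lt_of_pow_apply_eq_self hk hka
    exact hσ j hjk hj
  · rw [hkb, swap_apply_right] at hτk
    refine iff_of_false (fun h => ?_) (not_not.2 ⟨k, by rwa [zpow_natCast]⟩)
    obtain ⟨j, hjk, hj⟩ := h.exists_pow_lt_of_pow_apply_eq_self hk hτk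
    exact hτ j hjk hj

theorem SameCycle.of_swap_mul [Finite α] (hab : σ.SameCycle x a ↔ σ.SameCycle x b)
    (h : (swap a b * σ).SameCycle x y) : σ.SameCycle x y :=
  h.mem_of_mapsTo (mapsTo_swap_mul (mapsTo_sameCycle σ x) hab) SameCycle.rfl

theorem SameCycle.of_swap_mul_of_sameCycle [Finite α] (h : (swap a b * σ).SameCycle x y)
    (hab : σ.SameCycle a b) : σ.SameCycle x y :=
  h.of_swap_mul ⟨fun ha => ha.trans hab, fun hb => hb.trans hab.symm⟩

theorem sameCycle_swap_mul_iff_of_not_sameCycle [Finite α] (ha : ¬σ.SameCycle x a)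
    (hb : ¬σ.SameCycle x b) : (swap a b * σ).SameCycle x y ↔ σ.SameCycle x y := by
  have hτ (c) (hc : ¬σ.SameCycle x c) : ¬(swap a b * σ).SameCycle x c :=
    fun h => hc (h.of_swap_mul (iff_of_false ha hb))
  refine ⟨SameCycle.of_swap_mul (iff_of_false ha hb), fun h => ?_⟩
  rw [← swap_mul_self_mul a b σ] at h
  exact h.of_swap_mul (iff_of_false (hτ a ha) (hτ b hb))

theorem sameCycle_swap_mul_left_iff [Finite α] (hab : ¬σ.SameCycle a b) :
    (swap a b * σ).SameCycle a y ↔ σ.SameCycle a y ∨ σ.SameCycle b y := by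
  have hmerge : (swap a b * σ).SameCycle a b :=
    (sameCycle_swap_mul_iff (by rintro rfl; exact hab .rfl)).2 hab
  constructor
  · refine fun h => h.mem_of_mapsTo (s := {y | σ.SameCycle a y ∨ σ.SameCycle b y})
      (mapsTo_swap_mul ?_ (iff_of_true (Or.inl .rfl) (Or.inr .rfl))) (Or.inl .rfl)
    exact (mapsTo_sameCycle σ a).union_union (mapsTo_sameCycle σ b)
  · rintro (h | h) <;> rw [← swap_mul_self_mul a b σ] at h
    · exact h.of_swap_mul (iff_of_true .rfl hmerge)
    · exact hmerge.trans (h.of_swap_mul (iff_of_true hmerge.symm .rfl))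

variable [Fintype α]

-- Unlike `(σ.cycleOf x).support`, this is `{x}` rather than `∅` at a fixed point.
def sameCycleClass (σ : Perm α) (x : α) : Finset α := {y | σ.SameCycle x y}

def numCycles (σ : Perm α) : ℕ := #(univ.image σ.sameCycleClass)

@[simp]
theorem mem_sameCycleClass : y ∈ σ.sameCycleClass x ↔ σ.SameCycle x y := by
  simp [sameCycleClass]

theorem sameCycleClass_eq_iff : σ.sameCycleClass x = σ.sameCycleClass y ↔ σ.SameCycle x y :=
  ⟨fun h => mem_sameCycleClass.1 (h ▸ mem_sameCycleClass.2 .rfl),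
    fun h => Finset.ext fun _ => by simpa using ⟨h.symm.trans, h.trans⟩⟩

theorem numCycles_one : numCycles (1 : Perm α) = Fintype.card α := by
  rw [numCycles, card_image_of_injective _ fun x y h => ?_, card_univ]
  simpa using sameCycleClass_eq_iff.1 h

theorem numCycles_lt_card (hσ : σ ≠ 1) : numCycles σ < Fintype.card α := by
  obtain ⟨x, hx⟩ : ∃ x, σ x ≠ x := by simpa [Perm.ext_iff] using hσ
  refine (card_image_le.trans_eq card_univ).lt_of_ne fun h => hx ?_
  rw [← card_univ, card_image_iff] at h
  exact h (mem_coe.2 (mem_univ _)) (mem_coe.2 (mem_univ _))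
    (sameCycleClass_eq_iff.2 (sameCycle_apply_left.2 .rfl))

theorem sameCycleClass_swap_mul_left (hab : ¬σ.SameCycle a b) :
    (swap a b * σ).sameCycleClass a = σ.sameCycleClass a ∪ σ.sameCycleClass b := by
  ext y
  simp [sameCycle_swap_mul_left_iff hab]

theorem sameCycleClass_swap_mul_of_not_sameCycle (ha : ¬σ.SameCycle x a)
    (hb : ¬σ.SameCycle x b) : (swap a b * σ).sameCycleClass x = σ.sameCycleClass x := by
  ext y
  simp [sameCycle_swap_mul_iff_of_not_sameCycle ha hb]

theorem numCycles_swap_mul_add_one (hab : ¬σ.SameCycle a b) :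
    numCycles (swap a b * σ) + 1 = numCycles σ := by
  rw [numCycles, numCycles]
  set C := σ.sameCycleClass
  have hmerged : univ.image (swap a b * σ).sameCycleClass =
      insert (C a ∪ C b) (((univ.image C).erase (C a)).erase (C b)) := by
    ext D
    simp only [mem_insert, mem_erase, mem_image, mem_univ, true_and]
    constructor
    · rintro ⟨x, rfl⟩
      by_cases hx : σ.SameCycle x a ∨ σ.SameCycle x b
      · left
        rw [← sameCycleClass_swap_mul_left hab, sameCycleClass_eq_iff, sameCycle_comm]
        exact (sameCycle_swap_mul_left_iff hab).2 (hx.imp SameCycle.symm SameCycle.symm)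
      · obtain ⟨ha, hb⟩ := not_or.1 hx
        rw [sameCycleClass_swap_mul_of_not_sameCycle ha hb]
        exact Or.inr ⟨mt sameCycleClass_eq_iff.1 hb, mt sameCycleClass_eq_iff.1 ha, x, rfl⟩
    · rintro (rfl | ⟨hb, ha, x, rfl⟩)
      · exact ⟨a, sameCycleClass_swap_mul_left hab⟩
      · exact ⟨x, sameCycleClass_swap_mul_of_not_sameCycle (mt sameCycleClass_eq_iff.2 ha)
          (mt sameCycleClass_eq_iff.2 hb)⟩
  have hCa : C a ∈ univ.image C := mem_image_of_mem _ (mem_univ a)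
  have hCb : C b ∈ (univ.image C).erase (C a) :=
    mem_erase.2 ⟨fun h => hab (sameCycleClass_eq_iff.1 h.symm), mem_image_of_mem _ (mem_univ b)⟩
  have hU : C a ∪ C b ∉ ((univ.image C).erase (C a)).erase (C b) := by
    simp only [mem_erase, mem_image, mem_univ, true_and, not_and, not_exists]
    intro _ ha x hx
    have hxa : a ∈ C x := hx ▸ mem_union_left _ (mem_sameCycleClass.2 .rfl)
    exact ha (hx.symm.trans (sameCycleClass_eq_iff.2 (mem_sameCycleClass.1 hxa)))
  have htwo := card_pos.2 ⟨_, hCb⟩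
  rw [card_erase_of_mem hCa] at htwo
  rw [hmerged, card_insert_of_notMem hU, card_erase_of_mem hCb, card_erase_of_mem hCa]
  omega

theorem numCycles_swap_mul (hab : a ≠ b) (h : σ.SameCycle a b) :
    numCycles (swap a b * σ) = numCycles σ + 1 := by
  have hsplit : ¬(swap a b * σ).SameCycle a b := fun h' => (sameCycle_swap_mul_iff hab).1 h' h
  have := numCycles_swap_mul_add_one hsplit
  rw [swap_mul_self_mul] at this
  omega

theorem card_le_length_add_numCycles_prod (l : List (Perm α)) (hl : ∀ t ∈ l, t.IsSwap) :
    Fintype.card α ≤ l.length + numCycles l.prod := by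
  induction l with
  | nil => simp [numCycles_one]
  | cons t l ih =>
    obtain ⟨a, b, hab, rfl⟩ := hl t List.mem_cons_self
    have := ih fun u hu => hl u (List.mem_cons_of_mem _ hu)
    rw [List.prod_cons, List.length_cons]
    by_cases h : l.prod.SameCycle a b
    · have := numCycles_swap_mul hab h
      omega
    · have := numCycles_swap_mul_add_one h
      omega

theorem exists_isSwap_list_prod_eq (σ : Perm α) : ∃ l : List (Perm α),
    (∀ t ∈ l, t.IsSwap) ∧ l.prod = σ ∧ l.length + numCycles σ = Fintype.card α := by
  induction hk : Fintype.card α - numCycles σ generalizing σ with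
  | zero =>
    obtain rfl : σ = 1 := by_contra fun h => by have := numCycles_lt_card h; omega
    exact ⟨[], by simp, rfl, by simp [numCycles_one]⟩
  | succ k ih =>
    obtain ⟨x, hx⟩ : ∃ x, σ x ≠ x := by
      by_contra! h
      rw [show σ = 1 from Equiv.ext h, numCycles_one] at hk
      omega
    have hsplit := numCycles_swap_mul hx.symm (sameCycle_apply_right.2 .rfl)
    obtain ⟨l, hl, hprod, hlen⟩ := ih (swap x (σ x) * σ) (by omega)
    refine ⟨swap x (σ x) :: l, ?_, by rw [List.prod_cons, hprod, swap_mul_self_mul], ?_⟩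
    · intro t ht
      rcases List.mem_cons.1 ht with rfl | ht
      exacts [⟨x, σ x, hx.symm, rfl⟩, hl t ht]
    · rw [List.length_cons]
      omega

end Equiv.Perm

open Equiv Equiv.Perm

section Greedy

variable {n : ℕ} {σ : Perm (Fin n)} {s : List (Perm (Fin n))} {a b x y : Fin n}

theorem cayleyLength_add_numCycles (σ : Perm (Fin n)) :
    cayleyLength σ + numCycles σ = n := by
  obtain ⟨l, hl, hprod, hlen⟩ := exists_isSwap_list_prod_eq σ
  rw [Fintype.card_fin] at hlen
  have hle : cayleyLength σ ≤ l.length := Nat.sInf_le ⟨l, rfl, hl, hprod⟩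
  have hge : l.length ≤ cayleyLength σ := by
    refine le_csInf ⟨_, l, rfl, hl, hprod⟩ ?_
    rintro k ⟨l', rfl, hl', rfl⟩
    have := card_le_length_add_numCycles_prod l' hl'
    rw [Fintype.card_fin] at this
    omega
  omega

theorem cayleyLength_swap_mul_lt_iff (hab : a ≠ b) :
    cayleyLength (swap a b * σ) < cayleyLength σ ↔ σ.SameCycle a b := by
  have h₁ := cayleyLength_add_numCycles σ
  have h₂ := cayleyLength_add_numCycles (swap a b * σ)
  by_cases h : σ.SameCycle a b
  · have := numCycles_swap_mul hab h
    exact iff_of_true (by omega) h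
  · have := numCycles_swap_mul_add_one h
    exact iff_of_false (by omega) h

theorem greedy_cons (σ t : Perm (Fin n)) (s : List (Perm (Fin n))) :
    greedy σ (t :: s) =
      greedy (if cayleyLength (t * σ) < cayleyLength σ then t * σ else σ) s :=
  rfl

theorem Equiv.Perm.SameCycle.of_greedy (hs : ∀ t ∈ s, t.IsSwap)
    (h : (greedy σ s).SameCycle x y) : σ.SameCycle x y := by
  induction s generalizing σ with
  | nil => exact h
  | cons t s ih =>
    rw [greedy_cons] at h
    have h' := ih (fun u hu => hs u (List.mem_cons_of_mem _ hu)) h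
    split_ifs at h' with hlt
    · obtain ⟨a, b, hab, rfl⟩ := hs t List.mem_cons_self
      exact h'.of_swap_mul_of_sameCycle ((cayleyLength_swap_mul_lt_iff hab).1 hlt)
    · exact h'

theorem not_sameCycle_greedy_of_swap_mem (hs : ∀ t ∈ s, t.IsSwap) (hab : a ≠ b)
    (hmem : swap a b ∈ s) : ¬(greedy σ s).SameCycle a b := by
  induction s generalizing σ with
  | nil => simp at hmem
  | cons t s ih =>
    have hs' : ∀ u ∈ s, u.IsSwap := fun u hu => hs u (List.mem_cons_of_mem _ hu)
    rcases List.mem_cons.1 hmem with rfl | hmem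
    · rw [greedy_cons]
      refine fun h => ?_
      have h' := h.of_greedy hs'
      split_ifs at h' with hlt
      · exact (sameCycle_swap_mul_iff hab).1 h' ((cayleyLength_swap_mul_lt_iff hab).1 hlt)
      · exact hlt ((cayleyLength_swap_mul_lt_iff hab).2 h')
    · exact ih hs' hmem

end Greedy

/-- If the greedy procedure along a sequence of transpositions
`s_1, …, s_m`, started from `π`, terminates at `π′ ≠ 1`, then there are `p ≠ q` in the
same cycle of `π′` such that the transposition `(p q)` never occurs in the sequence.
Equivalently, if every transposition occurs in the sequence, the greedy procedure
terminates at the identity. -/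
theorem greedy_terminates_at_one (n : ℕ) (π : Equiv.Perm (Fin n))
    (s : List (Equiv.Perm (Fin n))) (hs : ∀ t ∈ s, t.IsSwap) :
    (greedy π s ≠ 1 →
      ∃ p q : Fin n, p ≠ q ∧ (greedy π s).SameCycle p q ∧ Equiv.swap p q ∉ s) ∧
    ((∀ τ : Equiv.Perm (Fin n), τ.IsSwap → τ ∈ s) → greedy π s = 1) := by
  have hnontrivial : greedy π s ≠ 1 →
      ∃ p q : Fin n, p ≠ q ∧ (greedy π s).SameCycle p q ∧ Equiv.swap p q ∉ s := by
    intro hne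
    obtain ⟨x, hx⟩ : ∃ x, greedy π s x ≠ x := by
      by_contra! h
      exact hne (Equiv.ext h)
    exact ⟨x, greedy π s x, hx.symm, sameCycle_apply_right.2 .rfl,
      fun hmem => not_sameCycle_greedy_of_swap_mem hs hx.symm hmem (sameCycle_apply_right.2 .rfl)⟩
  refine ⟨hnontrivial, fun hall => by_contra fun hne => ?_⟩
  obtain ⟨p, q, hpq, -, hmem⟩ := hnontrivial hne
  exact hmem (hall _ ⟨p, q, hpq, rfl⟩)
end

section
/- Let T be a mutation time for an irreducible Markov chain on S_n with uniform stationary distribution, and suppose P(T > t) < ε. Then after t steps the separation distance from the uniform distribution is at most ε: for every starting state x_0 and every permutation π′, the probability that the chain started at x_0 is at π′ at time t is at least (1 − ε)/n!. -/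
/-!
Split the paths from `x0` according to whether `T` has occurred by time `t`. The paths on which
it has carry mass more than `1 - ε`, and those among them ending at any fixed `π` inject, with
probabilities preserved, into the paths ending at `π'`. Summing over the `n!` choices of `π`
gives `1 - ε < n! · P^t(x0, π')`.
-/

open Finset

/-- The probability of a length-`t` path `p` under a transition kernel `P`. -/
noncomputable def pathProb {n : ℕ} (t : ℕ)
    (P : Equiv.Perm (Fin n) → Equiv.Perm (Fin n) → ℝ)
    (p : Fin (t + 1) → Equiv.Perm (Fin n)) : ℝ :=
  ∏ i : Fin t, P (p i.castSucc) (p i.succ)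

/-- The `k`-step transition kernel. -/
noncomputable def kernelIter {n : ℕ}
    (P : Equiv.Perm (Fin n) → Equiv.Perm (Fin n) → ℝ) :
    ℕ → Equiv.Perm (Fin n) → Equiv.Perm (Fin n) → ℝ
  | 0 => fun x y => if x = y then 1 else 0
  | (k + 1) => fun x y => ∑ z, kernelIter P k x z * P z y

open Function

theorem Fin.sum_filter_zero_eq_sum_cons {α M : Type*} [Fintype α] [DecidableEq α]
    [AddCommMonoid M] {m : ℕ} (x : α) (f : (Fin (m + 1) → α) → M) :
    ∑ p ∈ univ.filter (fun p : Fin (m + 1) → α => p 0 = x), f p =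
      ∑ q : Fin m → α, f (Fin.cons x q) := by
  refine Finset.sum_nbij' Fin.tail (Fin.cons (α := fun _ => α) x) (by simp) (by simp) ?_
    (by simp) ?_ <;>
  · intro p hp
    rw [← (mem_filter.1 hp).2, Fin.cons_self_tail]

theorem Fintype.sum_le_sum_of_injective {α β M : Type*} [Fintype α] [Fintype β]
    [AddCommMonoid M] [PartialOrder M] [IsOrderedAddMonoid M] {f : α → β} (hf : Injective f)
    (u : α → M) (v : β → M) (huv : ∀ a, v (f a) = u a) (hv : ∀ b, 0 ≤ v b) :
    ∑ a, u a ≤ ∑ b, v b := by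
  classical
  calc ∑ a, u a = ∑ a, v (f a) := by simp only [huv]
    _ = ∑ b ∈ univ.map ⟨f, hf⟩, v b := by rw [sum_map]; rfl
    _ ≤ ∑ b, v b := sum_le_sum_of_subset_of_nonneg (subset_univ _) fun b _ _ => hv b

section Paths

variable {n : ℕ} (P : Equiv.Perm (Fin n) → Equiv.Perm (Fin n) → ℝ)

lemma pathProb_nonneg (hP0 : ∀ x y, 0 ≤ P x y) {t : ℕ} (p : Fin (t + 1) → Equiv.Perm (Fin n)) :
    0 ≤ pathProb t P p :=
  prod_nonneg fun _ _ => hP0 _ _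

lemma pathProb_cons {t : ℕ} (x : Equiv.Perm (Fin n)) (q : Fin (t + 1) → Equiv.Perm (Fin n)) :
    pathProb (t + 1) P (Fin.cons x q) = P x (q 0) * pathProb t P q := by
  simp only [pathProb, Fin.prod_univ_succ, Fin.castSucc_zero, Fin.cons_zero, Fin.cons_succ,
    ← Fin.succ_castSucc]

lemma sum_pathProb_eq_one (hrow : ∀ x, ∑ y, P x y = 1) (t : ℕ) (x : Equiv.Perm (Fin n)) :
    ∑ p ∈ univ.filter (fun p : Fin (t + 1) → Equiv.Perm (Fin n) => p 0 = x),
      pathProb t P p = 1 := by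
  induction t generalizing x with
  | zero => simp [Fin.sum_filter_zero_eq_sum_cons (m := 0), pathProb]
  | succ t ih =>
    rw [Fin.sum_filter_zero_eq_sum_cons]
    simp only [pathProb_cons]
    calc ∑ q : Fin (t + 1) → Equiv.Perm (Fin n), P x (q 0) * pathProb t P q
        = ∑ z, ∑ q ∈ univ.filter (fun q : Fin (t + 1) → Equiv.Perm (Fin n) => q 0 = z),
            P x (q 0) * pathProb t P q := (sum_fiberwise _ _ _).symm
      _ = ∑ z, P x z * ∑ q ∈ univ.filter
            (fun q : Fin (t + 1) → Equiv.Perm (Fin n) => q 0 = z), pathProb t P q := by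
          refine sum_congr rfl fun z _ => ?_
          rw [mul_sum]
          exact sum_congr rfl fun q hq => by rw [(mem_filter.1 hq).2]
      _ = 1 := by simp only [ih, mul_one, hrow]

lemma sum_pathProb_le_of_injective (hP0 : ∀ x y, 0 ≤ P x y) {t : ℕ}
    {A B : (Fin (t + 1) → Equiv.Perm (Fin n)) → Prop} [DecidablePred A] [DecidablePred B]
    {f : {p // A p} → {p // B p}} (hf : Injective f)
    (hprob : ∀ p, pathProb t P (f p).1 = pathProb t P p.1) :
    ∑ p ∈ univ.filter A, pathProb t P p ≤ ∑ p ∈ univ.filter B, pathProb t P p := by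
  rw [sum_subtype (p := A) _ (fun _ => by simp) (pathProb t P),
    sum_subtype (p := B) _ (fun _ => by simp) (pathProb t P)]
  exact Fintype.sum_le_sum_of_injective hf _ _ hprob fun p => pathProb_nonneg P hP0 p.1

end Paths

theorem mutation_time_separation_bound_general (n t : ℕ)
    (P : Equiv.Perm (Fin n) → Equiv.Perm (Fin n) → ℝ)
    (hP0 : ∀ x y, 0 ≤ P x y)
    (hrow : ∀ x, ∑ y, P x y = 1)
    (x0 : Equiv.Perm (Fin n)) (ε : ℝ)
    (Sat : (Fin (t + 1) → Equiv.Perm (Fin n)) → Prop) [DecidablePred Sat]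
    (hmut : ∀ π π' : Equiv.Perm (Fin n),
      ∃ f : {p : Fin (t + 1) → Equiv.Perm (Fin n) //
                p 0 = x0 ∧ Sat p ∧ p (Fin.last t) = π} →
            {p : Fin (t + 1) → Equiv.Perm (Fin n) //
                p 0 = x0 ∧ p (Fin.last t) = π'},
        Function.Injective f ∧ ∀ p, pathProb t P (f p).1 = pathProb t P p.1)
    (hT : ∑ p ∈ univ.filter
        (fun p : Fin (t + 1) → Equiv.Perm (Fin n) => p 0 = x0 ∧ ¬ Sat p),
        pathProb t P p < ε) :
    ∀ π' : Equiv.Perm (Fin n),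
      (1 - ε) / (Nat.factorial n : ℝ) ≤
        ∑ p ∈ univ.filter
          (fun p : Fin (t + 1) → Equiv.Perm (Fin n) =>
            p 0 = x0 ∧ p (Fin.last t) = π'),
          pathProb t P p := by
  intro π'
  set R := ∑ p ∈ univ.filter (fun p : Fin (t + 1) → Equiv.Perm (Fin n) =>
    p 0 = x0 ∧ p (Fin.last t) = π'), pathProb t P p
  set S := univ.filter (fun p : Fin (t + 1) → Equiv.Perm (Fin n) => p 0 = x0)
  have hsplit : ∑ p ∈ S.filter Sat, pathProb t P p + ∑ p ∈ S.filter (¬ Sat ·), pathProb t P p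
      = 1 := by
    rw [sum_filter_add_sum_filter_not, sum_pathProb_eq_one P hrow]
  have hle : ∑ p ∈ S.filter Sat, pathProb t P p ≤ (Nat.factorial n : ℝ) * R := by
    calc ∑ p ∈ S.filter Sat, pathProb t P p
        = ∑ π : Equiv.Perm (Fin n), ∑ p ∈ univ.filter (fun p : Fin (t + 1) → Equiv.Perm (Fin n)
            => p 0 = x0 ∧ Sat p ∧ p (Fin.last t) = π), pathProb t P p := by
          rw [← sum_fiberwise (S.filter Sat) (fun p => p (Fin.last t))]
          simp only [S, filter_filter, and_assoc]
      _ ≤ ∑ _π : Equiv.Perm (Fin n), R := sum_le_sum fun π _ =>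
          let ⟨_, hf, hprob⟩ := hmut π π'
          sum_pathProb_le_of_injective P hP0 hf hprob
      _ = (Nat.factorial n : ℝ) * R := by simp [Fintype.card_perm]
  have hbad : ∑ p ∈ S.filter (¬ Sat ·), pathProb t P p < ε := by
    simpa only [S, filter_filter] using hT
  rw [div_le_iff₀ (by positivity)]
  linarith

/-- Let `T` be a mutation time for an irreducible Markov chain on `S_n`
with uniform stationary distribution (doubly stochastic kernel `P`), and suppose
`P(T > t) < ε`. Then after `t` steps the separation distance from uniform is at most
`ε`: for every start `x0` and every permutation `π′`, the probability that the chain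
is at `π′` at time `t` is at least `(1 − ε)/n!`.

A path of length `t` from `x0` is `p : Fin (t+1) → S_n` with `p 0 = x0`; its
probability is the product of the transition probabilities. `Sat p` expresses that
the stopping time `T` is satisfied by time `t` along `p`; the mutation-time property
is the hypothesis `hmut`: probability-preserving injections from satisfying paths
ending at `π` into paths ending at `π′`. -/
theorem mutation_time_separation_bound (n t : ℕ)
    (P : Equiv.Perm (Fin n) → Equiv.Perm (Fin n) → ℝ)
    (hP0 : ∀ x y, 0 ≤ P x y)
    (hrow : ∀ x, ∑ y, P x y = 1)
    (hstat : ∀ y, ∑ x, P x y = 1)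
    (hirr : ∀ x y, ∃ k, 0 < kernelIter P k x y)
    (x0 : Equiv.Perm (Fin n)) (ε : ℝ)
    (Sat : (Fin (t + 1) → Equiv.Perm (Fin n)) → Prop) [DecidablePred Sat]
    (hmut : ∀ π π' : Equiv.Perm (Fin n),
      ∃ f : {p : Fin (t + 1) → Equiv.Perm (Fin n) //
                p 0 = x0 ∧ Sat p ∧ p (Fin.last t) = π} →
            {p : Fin (t + 1) → Equiv.Perm (Fin n) //
                p 0 = x0 ∧ p (Fin.last t) = π'},
        Function.Injective f ∧ ∀ p, pathProb t P (f p).1 = pathProb t P p.1)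
    (hT : ∑ p ∈ univ.filter
        (fun p : Fin (t + 1) → Equiv.Perm (Fin n) => p 0 = x0 ∧ ¬ Sat p),
        pathProb t P p < ε) :
    ∀ π' : Equiv.Perm (Fin n),
      (1 - ε) / (Nat.factorial n : ℝ) ≤
        ∑ p ∈ univ.filter
          (fun p : Fin (t + 1) → Equiv.Perm (Fin n) =>
            p 0 = x0 ∧ p (Fin.last t) = π'),
          pathProb t P p :=
  mutation_time_separation_bound_general n t P hP0 hrow x0 ε Sat hmut hT
end
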